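/- In the (ε, H)-smoothed game, for H > max{2, A·max_{i,j} v_{i,j}/ε}, once bidder i's total debt is nonnegative its utility is strictly decreasing in α_i: writing u_i(α) = −H ∑_j (p_{i,j} − v_{i,j}) x_{i,j} − (H − 2) ε α_i + A ∑_j v_{i,j} x_{i,j} + H ε^{1/2} on the region of nonnegative total debt, the term −(H−2)εα_i is strictly decreasing (H > 2), and for any good j newly acquired at multipliers above the minimum we have p_{i,j} ≥ v_{i,j} + ε, so the combined coefficient of x_{i,j}, namely −H(p_{i,j} − v_{i,j}) + A v_{i,j} ≤ −Hε + A v_{i,j} < 0, is negative, making u_i strictly decreasing in α_i on this region. -/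

import Mathlib

/-!
At a multiplier `t ≥ 1 + 2ε / v_i*` bidder `i` bids `t v_{i,j} ≥ v_{i,j} + 2ε`, so every good
with `p_{i,j} < v_{i,j} + ε` is won outright, whatever `t` is. Hence raising `α_i` can only move
the allocation of goods with `p_{i,j} ≥ v_{i,j} + ε`; there the allocation is nondecreasing (the
smoothed share is monotone in one's own bid) while its coefficient
`A v_{i,j} - H (p_{i,j} - v_{i,j}) ≤ A v_{i,j} - H ε` is negative because `H > A max v / ε`.
The remaining term `-(H - 2) ε α_i` is strictly decreasing since `H > 2`.
-/

/-- Highest bid `b_j* = max_k α_k v_{k,j}` for good `j`. -/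
noncomputable def bstar {n m : ℕ} [NeZero n] (v : Fin n → Fin m → ℝ)
    (α : Fin n → ℝ) (j : Fin m) : ℝ :=
  Finset.univ.sup' Finset.univ_nonempty fun k => α k * v k j

/-- The smoothed allocation of good `j` to bidder `i`. -/
noncomputable def xalloc {n m : ℕ} [NeZero n] (v : Fin n → Fin m → ℝ) (ε : ℝ)
    (α : Fin n → ℝ) (j : Fin m) (i : Fin n) : ℝ :=
  if bstar v α j - ε ≤ α i * v i j then
    (α i * v i j - (bstar v α j - ε)) /
      ∑ k ∈ Finset.univ.filter fun k => bstar v α j - ε ≤ α k * v k j,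
        (α k * v k j - (bstar v α j - ε))
  else 0

/-- `v_i* = min{v_{i,j} : v_{i,j} > 0}`. -/
noncomputable def vstar {n m : ℕ} (v : Fin n → Fin m → ℝ) (i : Fin n) : ℝ :=
  sInf {r | ∃ j, v i j = r ∧ 0 < r}

/-- `max_{k,j} v_{k,j}`. -/
noncomputable def vmax {n m : ℕ} [NeZero n] [NeZero m] (v : Fin n → Fin m → ℝ) : ℝ :=
  Finset.univ.sup' Finset.univ_nonempty fun q : Fin n × Fin m => v q.1 q.2

/-- `p_{i,j}`: the highest bid on good `j` among bidders other than `i` (0 if none). -/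
noncomputable def pbid {n m : ℕ} (v : Fin n → Fin m → ℝ)
    (α : Fin n → ℝ) (i : Fin n) (j : Fin m) : ℝ :=
  sSup (insert 0 {b | ∃ k, k ≠ i ∧ b = α k * v k j})

open Finset Function

lemma div_add_le_div_add {a b c d : ℝ} (ha : 0 ≤ a) (hab : a ≤ b) (hd : 0 ≤ d) (hdc : d ≤ c)
    (hac : 0 < a + c) (hbd : 0 < b + d) : a / (a + c) ≤ b / (b + d) := by
  rw [div_le_div_iff₀ hac hbd]
  nlinarith

section SmoothedShare

variable {ι : Type*} [Fintype ι] [Nonempty ι] {ε : ℝ}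

noncomputable def bidExcess (ε : ℝ) (b : ι → ℝ) (k : ι) : ℝ :=
  max 0 (b k - (univ.sup' univ_nonempty b - ε))

noncomputable def smoothedShare (ε : ℝ) (b : ι → ℝ) (i : ι) : ℝ :=
  bidExcess ε b i / ∑ k, bidExcess ε b k

lemma bidExcess_nonneg (ε : ℝ) (b : ι → ℝ) (k : ι) : 0 ≤ bidExcess ε b k :=
  le_max_left _ _

lemma bidExcess_of_sup'_eq (hε : 0 ≤ ε) {b : ι → ℝ} {k : ι}
    (hk : univ.sup' univ_nonempty b = b k) : bidExcess ε b k = ε := by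
  rw [bidExcess, hk, sub_sub_cancel, max_eq_right hε]

lemma sum_bidExcess_pos (hε : 0 < ε) (b : ι → ℝ) : 0 < ∑ k, bidExcess ε b k := by
  obtain ⟨k, -, hk⟩ := univ.exists_mem_eq_sup' univ_nonempty b
  calc 0 < bidExcess ε b k := by rw [bidExcess_of_sup'_eq hε.le hk]; exact hε
    _ ≤ ∑ k, bidExcess ε b k := single_le_sum (fun k _ => bidExcess_nonneg ε b k) (mem_univ k)

lemma smoothedShare_eq_one (hε : 0 < ε) {b : ι → ℝ} {i : ι}
    (h : ∀ k ≠ i, b k ≤ b i - ε) : smoothedShare ε b i = 1 := by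
  have hmax : univ.sup' univ_nonempty b = b i := by
    refine le_antisymm (sup'_le _ _ fun k _ => ?_) (le_sup' b (mem_univ i))
    rcases eq_or_ne k i with rfl | hk
    · exact le_rfl
    · linarith [h k hk]
  have hsum : ∑ k, bidExcess ε b k = bidExcess ε b i := by
    refine sum_eq_single i (fun k _ hk => ?_) (by simp)
    rw [bidExcess, hmax, max_eq_left]
    linarith [h k hk]
  rw [smoothedShare, hsum, bidExcess_of_sup'_eq hε.le hmax, div_self hε.ne']

variable [DecidableEq ι] {b : ι → ℝ} {i : ι} {s : ℝ}

lemma sup'_update_of_le (hs : b i ≤ s) :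
    univ.sup' univ_nonempty (update b i s) = max s (univ.sup' univ_nonempty b) := by
  refine le_antisymm (sup'_le _ _ fun k _ => ?_) (max_le ?_ (sup'_le _ _ fun k _ => ?_))
  · rcases eq_or_ne k i with rfl | hk
    · simp
    · rw [update_of_ne hk]
      exact (le_sup' b (mem_univ k)).trans (le_max_right _ _)
  · exact (update_self i s b).ge.trans (le_sup' (update b i s) (mem_univ i))
  · refine le_trans ?_ (le_sup' (update b i s) (mem_univ k))
    rcases eq_or_ne k i with rfl | hk
    · simpa using hs
    · rw [update_of_ne hk]

lemma bidExcess_le_update_self (hs : b i ≤ s) :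
    bidExcess ε b i ≤ bidExcess ε (update b i s) i := by
  have hbi := le_sup' b (mem_univ i)
  rw [bidExcess, bidExcess, sup'_update_of_le hs, update_self]
  refine max_le_max le_rfl ?_
  rcases max_cases s (univ.sup' univ_nonempty b) with ⟨h, -⟩ | ⟨h, -⟩ <;> rw [h] <;> linarith

lemma bidExcess_update_le_of_ne (hs : b i ≤ s) {k : ι} (hk : k ≠ i) :
    bidExcess ε (update b i s) k ≤ bidExcess ε b k := by
  rw [bidExcess, bidExcess, sup'_update_of_le hs, update_of_ne hk]
  exact max_le_max le_rfl (by linarith [le_max_right s (univ.sup' univ_nonempty b)])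

lemma smoothedShare_le_update_self (hε : 0 < ε) (hs : b i ≤ s) :
    smoothedShare ε b i ≤ smoothedShare ε (update b i s) i := by
  have hpos := sum_bidExcess_pos hε b
  have hpos' := sum_bidExcess_pos hε (update b i s)
  rw [← add_sum_erase _ _ (mem_univ i)] at hpos hpos'
  rw [smoothedShare, smoothedShare, ← add_sum_erase _ (bidExcess ε b) (mem_univ i),
    ← add_sum_erase _ (bidExcess ε (update b i s)) (mem_univ i)]
  exact div_add_le_div_add (bidExcess_nonneg ε b i) (bidExcess_le_update_self hs)
    (sum_nonneg fun k _ => bidExcess_nonneg ε _ k)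
    (sum_le_sum fun k hk => bidExcess_update_le_of_ne hs (ne_of_mem_erase hk)) hpos hpos'

lemma monotone_smoothedShare_update (hε : 0 < ε) (b : ι → ℝ) (i : ι) :
    Monotone fun s => smoothedShare ε (update b i s) i := by
  intro s₁ s₂ h
  simpa using smoothedShare_le_update_self hε (b := update b i s₁) (i := i) (s := s₂) (by simpa using h)

end SmoothedShare

section Game

variable {n m : ℕ} {v : Fin n → Fin m → ℝ} {α : Fin n → ℝ} {i : Fin n} {j : Fin m}
  {ε A H t : ℝ}

lemma xalloc_eq_smoothedShare [NeZero n] (v : Fin n → Fin m → ℝ) (ε : ℝ) (α : Fin n → ℝ)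
    (j : Fin m) (i : Fin n) : xalloc v ε α j i = smoothedShare ε (fun k => α k * v k j) i := by
  have hcut : ∀ c x : ℝ, (if c ≤ x then x - c else 0) = max 0 (x - c) := by
    intro c x
    split_ifs with h
    · exact (max_eq_right (sub_nonneg.2 h)).symm
    · exact (max_eq_left (by linarith)).symm
  rw [xalloc, sum_filter]
  simp only [hcut]
  unfold smoothedShare bidExcess bstar
  split_ifs with h
  · rw [max_eq_right (by linarith)]
  · rw [max_eq_left (by linarith), zero_div]

lemma bids_update (v : Fin n → Fin m → ℝ) (α : Fin n → ℝ) (i : Fin n) (t : ℝ) (j : Fin m) :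
    (fun k => update α i t k * v k j) = update (fun k => α k * v k j) i (t * v i j) :=
  funext (apply_update (fun k x => x * v k j) α i t)

lemma pbid_update_self (v : Fin n → Fin m → ℝ) (α : Fin n → ℝ) (i : Fin n) (t : ℝ)
    (j : Fin m) : pbid v (update α i t) i j = pbid v α i j := by
  unfold pbid
  congr 2
  ext b
  refine exists_congr fun k => and_congr_right fun hk => ?_
  rw [update_of_ne hk]

lemma mul_le_pbid {k : Fin n} (hk : k ≠ i) : α k * v k j ≤ pbid v α i j := by
  refine le_csSup ((Set.Finite.subset (Set.finite_range fun k => α k * v k j) ?_).insert 0).bddAbove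
    (Set.mem_insert_of_mem _ ⟨k, hk, rfl⟩)
  rintro b ⟨k', -, rfl⟩
  exact ⟨k', rfl⟩

lemma vstar_nonneg (v : Fin n → Fin m → ℝ) (i : Fin n) : 0 ≤ vstar v i :=
  Real.sInf_nonneg fun _ ⟨_, _, hr⟩ => hr.le

lemma vstar_le (hv : 0 < v i j) : vstar v i ≤ v i j :=
  csInf_le ⟨0, by rintro _ ⟨_, _, hr⟩; exact hr.le⟩ ⟨j, rfl, hv⟩

lemma vstar_pos (hv : 0 < v i j) : 0 < vstar v i := by
  have hfin : {r | ∃ j, v i j = r ∧ 0 < r}.Finite :=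
    (Set.finite_range (v i)).subset (by rintro _ ⟨j', rfl, -⟩; exact ⟨j', rfl⟩)
  obtain ⟨_, _, hr⟩ := Set.Nonempty.csInf_mem (s := {r | ∃ j, v i j = r ∧ 0 < r})
    ⟨v i j, j, rfl, hv⟩ hfin
  exact hr

lemma value_add_two_mul_le_bid (hε : 0 ≤ ε) (hv : 0 < v i j)
    (ht : 1 + 2 * ε / vstar v i ≤ t) : v i j + 2 * ε ≤ t * v i j := by
  have hpos := vstar_pos hv
  have h2ε : 2 * ε ≤ 2 * ε / vstar v i * v i j := by
    rw [div_mul_eq_mul_div, le_div_iff₀ hpos]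
    gcongr
    exact vstar_le hv
  calc v i j + 2 * ε ≤ (1 + 2 * ε / vstar v i) * v i j := by linarith
    _ ≤ t * v i j := by gcongr

lemma monotone_xalloc_update [NeZero n] (hε : 0 < ε) (hv : 0 ≤ v i j) (α : Fin n → ℝ) :
    Monotone fun t => xalloc v ε (update α i t) j i := by
  intro t₁ t₂ h
  simp only [xalloc_eq_smoothedShare, bids_update]
  exact monotone_smoothedShare_update hε _ i (mul_le_mul_of_nonneg_right h hv)

lemma xalloc_update_eq_one [NeZero n] (hε : 0 < ε) (hv : 0 < v i j)
    (ht : 1 + 2 * ε / vstar v i ≤ t) (hp : pbid v α i j < v i j + ε) :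
    xalloc v ε (update α i t) j i = 1 := by
  rw [xalloc_eq_smoothedShare, bids_update]
  refine smoothedShare_eq_one hε fun k hk => ?_
  rw [update_self, update_of_ne hk]
  linarith [mul_le_pbid (α := α) (v := v) (j := j) hk, value_add_two_mul_le_bid hε.le hv ht]

lemma antitoneOn_coeff_mul_xalloc_update [NeZero n] (hε : 0 < ε) (hv : 0 ≤ v i j)
    (hH : 0 ≤ H) (hAH : A * v i j ≤ H * ε) (α : Fin n → ℝ) :
    AntitoneOn
      (fun t => (A * v i j - H * (pbid v α i j - v i j)) * xalloc v ε (update α i t) j i)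
      (Set.Ici (1 + 2 * ε / vstar v i)) := by
  intro t₁ ht₁ t₂ ht₂ h
  rcases le_or_gt (v i j + ε) (pbid v α i j) with hp | hp
  · have hcoeff : A * v i j - H * (pbid v α i j - v i j) ≤ 0 := by
      nlinarith [mul_le_mul_of_nonneg_left (by linarith : ε ≤ pbid v α i j - v i j) hH]
    exact mul_le_mul_of_nonpos_left (monotone_xalloc_update hε hv α h) hcoeff
  rcases hv.eq_or_lt with h0 | hpos
  · simp only [xalloc_eq_smoothedShare, bids_update, ← h0, mul_zero, le_refl]
  · simp only [xalloc_update_eq_one hε hpos ht₁ hp, xalloc_update_eq_one hε hpos ht₂ hp,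
      le_refl]

end Game

theorem stmt18_general {n m : ℕ} [NeZero n] [NeZero m] (v : Fin n → Fin m → ℝ)
    (hv : ∀ i j, 0 ≤ v i j) (ε A H : ℝ) (hε : 0 < ε)
    (hH : max 2 (A * vmax v / ε) < H)
    (i : Fin n) (α : Fin n → ℝ) :
    StrictAntiOn
      (fun t =>
        -H * ∑ j, (pbid v (Function.update α i t) i j - v i j) *
            xalloc v ε (Function.update α i t) j i
          - (H - 2) * ε * t
          + A * ∑ j, v i j * xalloc v ε (Function.update α i t) j i
          + H * Real.sqrt ε)
      {t | t ∈ Set.Icc (1 + 2 * ε / vstar v i) A ∧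
        0 ≤ ∑ j, (pbid v (Function.update α i t) i j - v i j) *
              xalloc v ε (Function.update α i t) j i
            + t * ε - Real.sqrt ε} := by
  have hH2 : 2 < H := (le_max_left _ _).trans_lt hH
  have hAH : A * vmax v < H * ε := (div_lt_iff₀ hε).1 ((le_max_right _ _).trans_lt hH)
  rintro t₁ ⟨⟨ht₁, ht₁A⟩, -⟩ t₂ ⟨⟨ht₂, -⟩, -⟩ h
  have hA : 0 ≤ A := by
    have := div_nonneg (mul_nonneg zero_le_two hε.le) (vstar_nonneg v i)
    linarith
  set c : Fin m → ℝ := fun j => A * v i j - H * (pbid v α i j - v i j)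
  have hsplit : ∀ t, -H * ∑ j, (pbid v (update α i t) i j - v i j) * xalloc v ε (update α i t) j i
      + A * ∑ j, v i j * xalloc v ε (update α i t) j i
      = ∑ j, c j * xalloc v ε (update α i t) j i := by
    intro t
    simp only [mul_sum, ← sum_add_distrib, pbid_update_self, c]
    exact sum_congr rfl fun j _ => by ring
  have hsum : ∑ j, c j * xalloc v ε (update α i t₂) j i
      ≤ ∑ j, c j * xalloc v ε (update α i t₁) j i := by
    refine sum_le_sum fun j _ => antitoneOn_coeff_mul_xalloc_update hε (hv i j) (by linarith)
      ?_ α ht₁ ht₂ h.le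
    have hvmax : v i j ≤ vmax v := le_sup' (fun q : Fin n × Fin m => v q.1 q.2) (mem_univ (i, j))
    nlinarith
  have hlin := mul_lt_mul_of_pos_left h (mul_pos (sub_pos.2 hH2) hε)
  simp only
  linarith [hsplit t₁, hsplit t₂]

/-- in the `(ε,H)`-smoothed game with `H > max{2, A·max_{i,j} v_{i,j}/ε}`,
once bidder `i`'s total debt is nonnegative its utility
`−H ∑_j (p_{i,j} − v_{i,j}) x_{i,j} − (H−2) ε α_i + A ∑_j v_{i,j} x_{i,j} + H ε^{1/2}`
is strictly decreasing in its own multiplier `α_i`. -/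
theorem stmt18 {n m : ℕ} [NeZero n] [NeZero m] (v : Fin n → Fin m → ℝ)
    (hv : ∀ i j, 0 ≤ v i j) (ε A H : ℝ) (hε : 0 < ε)
    (hH : max 2 (A * vmax v / ε) < H)
    (i : Fin n) (α : Fin n → ℝ)
    (hα : ∀ k, 1 + 2 * ε / vstar v k ≤ α k ∧ α k ≤ A) :
    StrictAntiOn
      (fun t =>
        -H * ∑ j, (pbid v (Function.update α i t) i j - v i j) *
            xalloc v ε (Function.update α i t) j i
          - (H - 2) * ε * t
          + A * ∑ j, v i j * xalloc v ε (Function.update α i t) j i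
          + H * Real.sqrt ε)
      {t | t ∈ Set.Icc (1 + 2 * ε / vstar v i) A ∧
        0 ≤ ∑ j, (pbid v (Function.update α i t) i j - v i j) *
              xalloc v ε (Function.update α i t) j i
            + t * ε - Real.sqrt ε} :=
  stmt18_general v hv ε A H hε hH i α
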